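/- arXiv:1709.00932 — 6 statements merged into one kernel-verified Lean document; each statement's English description precedes it below -/
import Mathlib

section
/- Let $m, n$ be positive sequences with $m_0 = n_0 = 1$, $m_{k+1}/m_k \to \infty$, $n_{k+1}/n_k \to \infty$, and suppose there exists $C \ge 1$ such that $m_{j+1}/m_j \le C\, n_{k+1}/n_k$ whenever $j \le k$. Then $\bar{\Gamma}_n(Ct) \le \underline{\Gamma}_m(t)$ for all $t > 0$, where $\bar{\Gamma}_n(s) := \min\{k : \inf_j n_j s^j = n_k s^k\}$ and $\underline{\Gamma}_m(t) := \min\{k : m_{k+1}/m_k \ge 1/t\}$. -/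
/-! For `k ≥ k₀ := Γlowm t` the comparison hypothesis gives `n (k + 1) / n k ≥ 1 / (C t)`, so
`k ↦ n k (C t) ^ k` is nondecreasing from `k₀` on. Its infimum is then a minimum over
`{0, …, k₀}`, attained at an index `≤ k₀`. -/

open Filter

theorem exists_le_iInf_eq_of_le_succ {α : Type*} [ConditionallyCompleteLinearOrder α]
    {f : ℕ → α} {k₀ : ℕ} (hf : ∀ k ≥ k₀, f k ≤ f (k + 1)) :
    ∃ k ≤ k₀, ⨅ j, f j = f k := by
  obtain ⟨k, hk, hmin⟩ :=
    (Finset.range (k₀ + 1)).exists_min_image f ⟨k₀, Finset.self_mem_range_succ k₀⟩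
  have hmono := monotoneOn_nat_Ici_of_le_succ hf
  have hlower : ∀ j, f k ≤ f j := by
    intro j
    rcases Nat.lt_or_ge j (k₀ + 1) with hj | hj
    · exact hmin j (Finset.mem_range.mpr hj)
    · exact (hmin k₀ (Finset.self_mem_range_succ k₀)).trans
        (hmono (le_refl k₀) (Nat.le_of_succ_le hj) (Nat.le_of_succ_le hj))
  refine ⟨k, Nat.lt_succ_iff.mp (Finset.mem_range.mp hk), ?_⟩
  exact le_antisymm (ciInf_le ⟨f k, by rintro _ ⟨j, rfl⟩; exact hlower j⟩ k) (le_ciInf hlower)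

theorem sInf_iInf_eq_le_of_le_succ {α : Type*} [ConditionallyCompleteLinearOrder α]
    {f : ℕ → α} {k₀ : ℕ} (hf : ∀ k ≥ k₀, f k ≤ f (k + 1)) :
    sInf {k : ℕ | ⨅ j, f j = f k} ≤ k₀ := by
  obtain ⟨k, hk, hinf⟩ := exists_le_iInf_eq_of_le_succ hf
  exact (Nat.sInf_le hinf).trans hk

theorem mul_pow_le_mul_pow_succ {a b s : ℝ} (ha : 0 < a) (hs : 0 < s) (hab : 1 / s ≤ b / a)
    (k : ℕ) : a * s ^ k ≤ b * s ^ (k + 1) := by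
  have hab' : a ≤ b * s := by
    rwa [div_le_div_iff₀ hs ha, one_mul] at hab
  calc a * s ^ k ≤ b * s * s ^ k := by gcongr
    _ = b * s ^ (k + 1) := by ring

theorem stmt8_general (m n : ℕ → ℝ) (hnpos : ∀ k, 0 < n k)
    (hmquot : Tendsto (fun k => m (k + 1) / m k) atTop atTop)
    (C : ℝ) (hC : 1 ≤ C)
    (hcomp : ∀ j k : ℕ, j ≤ k → m (j + 1) / m j ≤ C * (n (k + 1) / n k))
    (Γlowm Γupn : ℝ → ℕ)
    (hΓlowm : ∀ t > (0 : ℝ), Γlowm t = sInf {k : ℕ | 1 / t ≤ m (k + 1) / m k})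
    (hΓupn : ∀ s > (0 : ℝ), Γupn s = sInf {k : ℕ | (⨅ j : ℕ, n j * s ^ j) = n k * s ^ k}) :
    ∀ t > (0 : ℝ), Γupn (C * t) ≤ Γlowm t := by
  intro t ht
  have hCpos : 0 < C := one_pos.trans_le hC
  have hCt : 0 < C * t := mul_pos hCpos ht
  have hk₀ : 1 / t ≤ m (Γlowm t + 1) / m (Γlowm t) := by
    rw [hΓlowm t ht]
    exact Nat.sInf_mem (hmquot.eventually_ge_atTop (1 / t)).exists
  have hnquot_ge : ∀ k ≥ Γlowm t, 1 / (C * t) ≤ n (k + 1) / n k := by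
    intro k hk
    rw [mul_comm, ← div_div, div_le_iff₀' hCpos]
    exact hk₀.trans (hcomp _ k hk)
  rw [hΓupn _ hCt]
  exact sInf_iInf_eq_le_of_le_succ fun k hk =>
    mul_pow_le_mul_pow_succ (hnpos k) hCt (hnquot_ge k hk) k

theorem stmt8 (m n : ℕ → ℝ) (hmpos : ∀ k, 0 < m k) (hnpos : ∀ k, 0 < n k)
    (hm0 : m 0 = 1) (hn0 : n 0 = 1)
    (hmquot : Tendsto (fun k => m (k + 1) / m k) atTop atTop)
    (hnquot : Tendsto (fun k => n (k + 1) / n k) atTop atTop)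
    (C : ℝ) (hC : 1 ≤ C)
    (hcomp : ∀ j k : ℕ, j ≤ k → m (j + 1) / m j ≤ C * (n (k + 1) / n k))
    (Γlowm Γupn : ℝ → ℕ)
    (hΓlowm : ∀ t > (0 : ℝ), Γlowm t = sInf {k : ℕ | 1 / t ≤ m (k + 1) / m k})
    (hΓupn : ∀ s > (0 : ℝ), Γupn s = sInf {k : ℕ | (⨅ j : ℕ, n j * s ^ j) = n k * s ^ k}) :
    ∀ t > (0 : ℝ), Γupn (C * t) ≤ Γlowm t :=
  stmt8_general m n hnpos hmquot C hC hcomp Γlowm Γupn hΓlowm hΓupn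
end

section
/- Let $M$ be a weight sequence with $m_k := M_k/k!$ satisfying $m_k^{1/k} \to \infty$. Define $\omega_M(t) := \sup_{k} \log(t^k/M_k)$ and $\omega_m(t) := \sup_k \log(t^k/m_k)$ for $t > 0$, and $\omega_M^*(s) := \sup_{t \ge 0}(\omega_M(t) - st)$. Then for all $t > 0$: $\omega_M^*(t) \le \omega_m(1/t) \le \omega_M^*(t/e)$. -/
open Filter

lemma aux_bdd (f : ℕ → ℝ) (hf : ∀ k, 0 < f k)
    (hroot : Tendsto (fun k => f k ^ (1 / (k : ℝ))) atTop atTop) {s : ℝ} (hs : 0 < s) :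
    BddAbove {y | ∃ k : ℕ, y = Real.log (s ^ k / f k)} := by
  have hset : {y | ∃ k : ℕ, y = Real.log (s ^ k / f k)}
      = Set.range (fun k : ℕ => Real.log (s ^ k / f k)) := by
    ext y; simp [eq_comm]
  rw [hset]
  have hlog : Tendsto (fun k : ℕ => (1 / (k : ℝ)) * Real.log (f k)) atTop atTop := by
    have h := Real.tendsto_log_atTop.comp hroot
    refine h.congr' ?_
    filter_upwards [eventually_gt_atTop 0] with k _
    simp only [Function.comp_apply]
    rw [Real.log_rpow (hf k)]
  have hev : ∀ᶠ k : ℕ in atTop, Real.log (s ^ k / f k) ≤ 0 := by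
    filter_upwards [hlog.eventually_ge_atTop (Real.log s), eventually_gt_atTop 0] with k h1 hk
    have hk' : (0 : ℝ) < k := Nat.cast_pos.mpr hk
    have h2 : (k : ℝ) * Real.log s ≤ Real.log (f k) := by
      calc (k : ℝ) * Real.log s ≤ (k : ℝ) * ((1 / (k : ℝ)) * Real.log (f k)) :=
            mul_le_mul_of_nonneg_left h1 hk'.le
        _ = Real.log (f k) := by field_simp
    rw [Real.log_div (pow_ne_zero _ hs.ne') (hf k).ne', Real.log_pow]
    linarith
  obtain ⟨N, hN⟩ := eventually_atTop.mp hev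
  have hsub : Set.range (fun k : ℕ => Real.log (s ^ k / f k)) ⊆
      ((fun k : ℕ => Real.log (s ^ k / f k)) '' Set.Iio N) ∪ Set.Iic 0 := by
    rintro y ⟨k, rfl⟩
    by_cases hk : k < N
    · exact Or.inl ⟨k, hk, rfl⟩
    · exact Or.inr (hN k (le_of_not_gt hk))
  exact (((Set.finite_Iio N).image _).bddAbove.union bddAbove_Iic).mono hsub

lemma aux_P1 (Mk : ℝ) (hMk : 0 < Mk) (k : ℕ) {u s : ℝ} (hu : 0 < u) (hs : 0 < s) :
    Real.log (u ^ k / Mk) - s * u ≤ Real.log ((1 / s) ^ k / (Mk / (Nat.factorial k : ℝ))) := by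
  have hF : (0 : ℝ) < (Nat.factorial k : ℝ) := by exact_mod_cast Nat.factorial_pos k
  have key : (k : ℝ) * Real.log (u * s) ≤ Real.log (Nat.factorial k : ℝ) + s * u := by
    rcases Nat.eq_zero_or_pos k with hk | hk
    · subst hk; simp; nlinarith [mul_pos hs hu]
    · have hkpos : (0 : ℝ) < k := Nat.cast_pos.mpr hk
      have h1 : Real.log (u * s / k) ≤ u * s / k - 1 :=
        Real.log_le_sub_one_of_pos (by positivity)
      have h2 : (k : ℝ) * Real.log k - Real.log (Nat.factorial k : ℝ) ≤ k := by
        have hle : (k : ℝ) ^ k / (Nat.factorial k : ℝ) ≤ Real.exp k :=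
          Real.pow_div_factorial_le_exp (x := (k:ℝ)) hkpos.le k
        have := Real.log_le_log (by positivity) hle
        rwa [Real.log_div (pow_ne_zero _ hkpos.ne') hF.ne', Real.log_pow, Real.log_exp] at this
      have e1 : Real.log (u * s / k) = Real.log (u * s) - Real.log k :=
        Real.log_div (by positivity) hkpos.ne'
      have e2 : (k : ℝ) * Real.log (u * s / k) ≤ u * s - k := by
        have h3 := mul_le_mul_of_nonneg_left h1 hkpos.le
        have h4 : (k : ℝ) * (u * s / k) = u * s := by field_simp
        nlinarith
      nlinarith [e2, h2, e1]
  rw [Real.log_div (pow_ne_zero _ hu.ne') hMk.ne', Real.log_pow,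
    Real.log_div (pow_ne_zero _ (by positivity : (1 / s : ℝ) ≠ 0)) (by positivity : Mk / (Nat.factorial k : ℝ) ≠ 0),
    Real.log_pow, Real.log_div hMk.ne' hF.ne',
    Real.log_div one_ne_zero hs.ne', Real.log_one]
  have hlogmul : Real.log (u * s) = Real.log u + Real.log s := Real.log_mul hu.ne' hs.ne'
  have e3 : (k : ℝ) * Real.log (u * s) = (k : ℝ) * Real.log u + (k : ℝ) * Real.log s := by
    rw [hlogmul]; ring
  push_cast
  nlinarith [key, e3]

lemma aux_P2 (Mk : ℝ) (hMk : 0 < Mk) (k : ℕ) (hk : 1 ≤ k) {t : ℝ} (ht : 0 < t) :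
    Real.log ((1 / t) ^ k / (Mk / (Nat.factorial k : ℝ))) ≤
      Real.log (((k : ℝ) * Real.exp 1 / t) ^ k / Mk)
        - (t / Real.exp 1) * ((k : ℝ) * Real.exp 1 / t) := by
  have hkpos : (0 : ℝ) < k := Nat.cast_pos.mpr hk
  have hF : (0 : ℝ) < (Nat.factorial k : ℝ) := by exact_mod_cast Nat.factorial_pos k
  have he : (0 : ℝ) < Real.exp 1 := Real.exp_pos 1
  have hu : (0 : ℝ) < (k : ℝ) * Real.exp 1 / t := by positivity
  have hfe : (t / Real.exp 1) * ((k : ℝ) * Real.exp 1 / t) = k := by field_simp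
  have hfac : Real.log (Nat.factorial k : ℝ) ≤ (k : ℝ) * Real.log k := by
    have hle : (Nat.factorial k : ℝ) ≤ (k : ℝ) ^ k := by exact_mod_cast Nat.factorial_le_pow k
    have := Real.log_le_log hF hle
    rwa [Real.log_pow] at this
  have hlogu : Real.log ((k : ℝ) * Real.exp 1 / t) = Real.log k + 1 - Real.log t := by
    rw [Real.log_div (by positivity) ht.ne', Real.log_mul hkpos.ne' he.ne', Real.log_exp]
  rw [hfe, Real.log_div (pow_ne_zero _ hu.ne') hMk.ne', Real.log_pow,
    Real.log_div (pow_ne_zero _ (by positivity : (1 / t : ℝ) ≠ 0))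
      (by positivity : Mk / (Nat.factorial k : ℝ) ≠ 0),
    Real.log_pow, Real.log_div hMk.ne' hF.ne',
    Real.log_div one_ne_zero ht.ne', Real.log_one, hlogu]
  nlinarith [hfac]

theorem stmt12 (M m : ℕ → ℝ) (hMpos : ∀ k, 0 < M k) (hM0 : M 0 = 1)
    (hlc : ∀ k : ℕ, 1 ≤ k → M k / M (k - 1) ≤ M (k + 1) / M k)
    (hMroot : Tendsto (fun k => M k ^ (1 / (k : ℝ))) atTop atTop)
    (hm : ∀ k, m k = M k / (Nat.factorial k : ℝ))
    (hmroot : Tendsto (fun k => m k ^ (1 / (k : ℝ))) atTop atTop)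
    (ωM ωm ωMs : ℝ → ℝ)
    (hωM : ∀ t > (0 : ℝ), ωM t = sSup {y | ∃ k : ℕ, y = Real.log (t ^ k / M k)})
    (hωM0 : ωM 0 = 0)
    (hωm : ∀ t > (0 : ℝ), ωm t = sSup {y | ∃ k : ℕ, y = Real.log (t ^ k / m k)})
    (hωMs : ∀ s > (0 : ℝ), ωMs s = sSup {y | ∃ t ≥ (0 : ℝ), y = ωM t - s * t}) :
    ∀ t > (0 : ℝ), ωMs t ≤ ωm (1 / t) ∧ ωm (1 / t) ≤ ωMs (t / Real.exp 1) := by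
  have hmpos : ∀ k, 0 < m k := fun k => by
    rw [hm]
    have hF : (0 : ℝ) < (Nat.factorial k : ℝ) := by exact_mod_cast Nat.factorial_pos k
    exact div_pos (hMpos k) hF
  have hm0 : m 0 = 1 := by simp [hm, hM0]
  have hbddm : ∀ s : ℝ, 0 < s → BddAbove {y | ∃ k : ℕ, y = Real.log (s ^ k / m k)} :=
    fun s hs => aux_bdd m hmpos hmroot hs
  have hbddM : ∀ s : ℝ, 0 < s → BddAbove {y | ∃ k : ℕ, y = Real.log (s ^ k / M k)} :=
    fun s hs => aux_bdd M hMpos hMroot hs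
  have hzero : ∀ s : ℝ, (0:ℝ) ∈ {y | ∃ k : ℕ, y = Real.log (s ^ k / m k)} :=
    fun s => ⟨0, by simp [hm0]⟩
  -- key estimate: every element of the ωMs-defining set is bounded by a sSup of m-type set
  have key : ∀ s : ℝ, 0 < s → ∀ u : ℝ, 0 ≤ u →
      ωM u - s * u ≤ sSup {y | ∃ k : ℕ, y = Real.log ((1 / s) ^ k / m k)} := by
    intro s hs u hu
    have hs' : (0 : ℝ) < 1 / s := by positivity
    have h0le : (0 : ℝ) ≤ sSup {y | ∃ k : ℕ, y = Real.log ((1 / s) ^ k / m k)} :=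
      le_csSup (hbddm _ hs') (hzero _)
    rcases eq_or_lt_of_le hu with h | h
    · rw [← h, hωM0]; simpa using h0le
    · rw [hωM u h, sub_le_iff_le_add]
      apply csSup_le
      · exact ⟨_, ⟨0, rfl⟩⟩
      rintro y ⟨k, rfl⟩
      have h1 := aux_P1 (M k) (hMpos k) k h hs
      have h2 : Real.log ((1 / s) ^ k / m k) ≤
          sSup {y | ∃ k : ℕ, y = Real.log ((1 / s) ^ k / m k)} :=
        le_csSup (hbddm _ hs') ⟨k, rfl⟩
      rw [hm k] at h2
      linarith
  intro t ht
  have ht' : (0 : ℝ) < 1 / t := by positivity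
  have hte : (0 : ℝ) < t / Real.exp 1 := by positivity
  constructor
  · rw [hωMs t ht, hωm (1 / t) ht']
    apply csSup_le
    · exact ⟨ωM 0 - t * 0, ⟨0, le_refl 0, rfl⟩⟩
    rintro y ⟨u, hu, rfl⟩
    exact key t ht u hu
  · rw [hωm (1 / t) ht', hωMs (t / Real.exp 1) hte]
    have hbddS : BddAbove {y | ∃ u ≥ (0:ℝ), y = ωM u - (t / Real.exp 1) * u} := by
      refine ⟨sSup {y | ∃ k : ℕ, y = Real.log ((1 / (t / Real.exp 1)) ^ k / m k)}, ?_⟩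
      rintro y ⟨u, hu, rfl⟩
      exact key (t / Real.exp 1) hte u hu
    apply csSup_le
    · exact ⟨_, ⟨0, rfl⟩⟩
    rintro y ⟨k, rfl⟩
    rcases Nat.eq_zero_or_pos k with hk | hk
    · subst hk
      have h0 : Real.log ((1 / t) ^ 0 / m 0) = 0 := by simp [hm0]
      rw [h0]
      refine le_csSup hbddS ⟨0, le_refl 0, ?_⟩
      simp [hωM0]
    · set u : ℝ := (k : ℝ) * Real.exp 1 / t with hudef
      have hupos : 0 < u := by positivity
      have h1 : Real.log ((1 / t) ^ k / m k) ≤ Real.log (u ^ k / M k) - (t / Real.exp 1) * u := by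
        rw [hm k]; exact aux_P2 (M k) (hMpos k) k hk ht
      have h2 : Real.log (u ^ k / M k) ≤ ωM u := by
        rw [hωM u hupos]; exact le_csSup (hbddM u hupos) ⟨k, rfl⟩
      have h3 : ωM u - (t / Real.exp 1) * u ≤
          sSup {y | ∃ u ≥ (0:ℝ), y = ωM u - (t / Real.exp 1) * u} :=
        le_csSup hbddS ⟨u, hupos.le, rfl⟩
      linarith
end

section
/- Let $M, N$ be positive sequences with $M_0 = N_0 = 1$ and suppose there is $C \ge 1$ such that $M_{j+k} \le C^{j+k} N_j N_k$ for all $j, k \in \mathbb{N}$. Define $h_M(t) := \inf_k M_k t^k$ and $h_N(t) := \inf_k N_k t^k$ for $t > 0$. Then $h_M(t) \le h_N(Ct)^2$ for all $t > 0$. -/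
theorem stmt14 (M N : ℕ → ℝ) (hMpos : ∀ k, 0 < M k) (hNpos : ∀ k, 0 < N k)
    (hM0 : M 0 = 1) (hN0 : N 0 = 1)
    (C : ℝ) (hC : 1 ≤ C)
    (hcomp : ∀ j k : ℕ, M (j + k) ≤ C ^ (j + k) * N j * N k)
    (hM hN : ℝ → ℝ)
    (hhM : ∀ t > (0 : ℝ), hM t = ⨅ k : ℕ, M k * t ^ k)
    (hhN : ∀ t > (0 : ℝ), hN t = ⨅ k : ℕ, N k * t ^ k) :
    ∀ t > (0 : ℝ), hM t ≤ (hN (C * t)) ^ 2 := by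
  intro t ht
  have hCt : (0 : ℝ) < C * t := by positivity
  rw [hhM t ht, hhN (C * t) hCt]
  set f : ℕ → ℝ := fun k => N k * (C * t) ^ k with hf
  set g : ℕ → ℝ := fun k => M k * t ^ k with hg
  have hfpos : ∀ k, 0 < f k := fun k => mul_pos (hNpos k) (pow_pos hCt k)
  have hbddf : BddBelow (Set.range f) := ⟨0, by rintro _ ⟨k, rfl⟩; exact (hfpos k).le⟩
  have hbddg : BddBelow (Set.range g) := ⟨0, by rintro _ ⟨k, rfl⟩; exact (mul_pos (hMpos k) (pow_pos ht k)).le⟩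
  set I : ℝ := ⨅ k, g k with hI
  set L : ℝ := ⨅ k, f k with hL
  have hL0 : 0 ≤ L := le_ciInf fun k => (hfpos k).le
  have key : ∀ j k : ℕ, I ≤ f j * f k := by
    intro j k
    have h1 : I ≤ g (j + k) := ciInf_le hbddg (j + k)
    have h2 : g (j + k) ≤ f j * f k := by
      have := hcomp j k
      have h3 : M (j + k) * t ^ (j + k) ≤ C ^ (j + k) * N j * N k * t ^ (j + k) := by
        apply mul_le_mul_of_nonneg_right this (by positivity)
      calc g (j + k) = M (j + k) * t ^ (j + k) := rfl
        _ ≤ C ^ (j + k) * N j * N k * t ^ (j + k) := h3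
        _ = f j * f k := by
            simp only [hf, mul_pow, pow_add]; ring
    exact h1.trans h2
  have step1 : ∀ j, I ≤ f j * L := by
    intro j
    have : I / f j ≤ L := le_ciInf fun k => (div_le_iff₀ (hfpos j)).2 (by
      calc I ≤ f j * f k := key j k
        _ = f k * f j := mul_comm _ _)
    calc I = I / f j * f j := (div_mul_cancel₀ I (hfpos j).ne').symm
      _ ≤ L * f j := mul_le_mul_of_nonneg_right this (hfpos j).le
      _ = f j * L := mul_comm _ _
  rcases hL0.lt_or_eq with hLpos | hLzero
  · have : I / L ≤ L := le_ciInf fun j => (div_le_iff₀ hLpos).2 (by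
      calc I ≤ f j * L := step1 j
        _ = L * f j := mul_comm _ _
        _ = f j * L := mul_comm _ _)
    have h4 : I / L ≤ L := this
    calc I = I / L * L := (div_mul_cancel₀ I hLpos.ne').symm
      _ ≤ L * L := mul_le_mul_of_nonneg_right h4 hLpos.le
      _ = L ^ 2 := (sq L).symm
  · have : I ≤ f 0 * L := step1 0
    rw [← hLzero] at this ⊢
    simpa using this.trans (by simp)
end

section
/- Let $M, N$ be weight sequences with $m_k^{1/k} \to \infty$ and $n_k^{1/k} \to \infty$ (where $m_k = M_k/k!$, $n_k = N_k/k!$), satisfying $M_{j+k} \le C^{j+k} N_j N_k$ for all $j,k$ and some $C \ge 1$. Then there exists $D \ge 1$ such that $h_m(t) \le h_n(Dt)^2$ for all $t > 0$, where $h_m(t) = \inf_k m_k t^k$. -/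
/-!
Since $j!\,k! \le (j+k)!$, the hypothesis $M_{j+k} \le C^{j+k} N_j N_k$ gives
$m_{j+k} t^{j+k} \le \bigl(n_j (Ct)^j\bigr)\bigl(n_k (Ct)^k\bigr)$, so $h_m(t)$ is a lower bound for
all products of two terms of the family whose infimum is $h_n(Ct)$; hence $D = C$ works.
-/

open Filter Nat

theorem Real.le_iInf_sq_of_le_mul {ι : Type*} [Nonempty ι] {g : ι → ℝ} {a : ℝ}
    (hg : ∀ i, 0 ≤ g i) (h : ∀ i j, a ≤ g i * g j) : a ≤ (⨅ i, g i) ^ 2 := by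
  rw [sq, Real.iInf_mul_of_nonneg (Real.iInf_nonneg hg)]
  refine le_ciInf fun i => ?_
  rw [Real.mul_iInf_of_nonneg (hg i)]
  exact le_ciInf (h i)

theorem div_factorial_mul_pow_add_le {M N : ℕ → ℝ} {C t : ℝ} (ht : 0 ≤ t) {j k : ℕ}
    (hM : 0 ≤ M (j + k)) (hMN : M (j + k) ≤ C ^ (j + k) * N j * N k) :
    M (j + k) / (j + k)! * t ^ (j + k) ≤ (N j / j ! * (C * t) ^ j) * (N k / k ! * (C * t) ^ k) :=
  calc M (j + k) / (j + k)! * t ^ (j + k)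
      ≤ C ^ (j + k) * N j * N k / (j ! * k ! : ℕ) * t ^ (j + k) := by
        gcongr
        · exact hM.trans hMN
        · exact Nat.le_of_dvd (j + k).factorial_pos (factorial_mul_factorial_dvd_factorial_add j k)
    _ = (N j / j ! * (C * t) ^ j) * (N k / k ! * (C * t) ^ k) := by
        push_cast
        ring

theorem stmt15_general (M N m n : ℕ → ℝ) (hMpos : ∀ k, 0 < M k) (hNpos : ∀ k, 0 < N k)
    (hm : ∀ k, m k = M k / (Nat.factorial k : ℝ))
    (hn : ∀ k, n k = N k / (Nat.factorial k : ℝ))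
    (C : ℝ) (hC : 1 ≤ C)
    (hcomp : ∀ j k : ℕ, M (j + k) ≤ C ^ (j + k) * N j * N k)
    (hm' hn' : ℝ → ℝ)
    (hhm : ∀ t > (0 : ℝ), hm' t = ⨅ k : ℕ, m k * t ^ k)
    (hhn : ∀ t > (0 : ℝ), hn' t = ⨅ k : ℕ, n k * t ^ k) :
    ∃ D : ℝ, 1 ≤ D ∧ ∀ t > (0 : ℝ), hm' t ≤ (hn' (D * t)) ^ 2 := by
  refine ⟨C, hC, fun t ht => ?_⟩
  rw [hhm t ht, hhn (C * t) (by positivity)]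
  have hn_term_nonneg (k : ℕ) : 0 ≤ n k * (C * t) ^ k := by
    have := hNpos k
    simp only [hn]
    positivity
  have hm_bddBelow : BddBelow (Set.range fun k => m k * t ^ k) := by
    refine ⟨0, ?_⟩
    rintro _ ⟨k, rfl⟩
    have := hMpos k
    simp only [hm]
    positivity
  refine Real.le_iInf_sq_of_le_mul hn_term_nonneg fun j k => (ciInf_le hm_bddBelow (j + k)).trans ?_
  simp only [hm, hn]
  exact div_factorial_mul_pow_add_le ht.le (hMpos _).le (hcomp j k)

theorem stmt15 (M N m n : ℕ → ℝ) (hMpos : ∀ k, 0 < M k) (hNpos : ∀ k, 0 < N k)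
    (hM0 : M 0 = 1) (hN0 : N 0 = 1)
    (hMlc : ∀ k : ℕ, 1 ≤ k → M k / M (k - 1) ≤ M (k + 1) / M k)
    (hNlc : ∀ k : ℕ, 1 ≤ k → N k / N (k - 1) ≤ N (k + 1) / N k)
    (hMroot : Tendsto (fun k => M k ^ (1 / (k : ℝ))) atTop atTop)
    (hNroot : Tendsto (fun k => N k ^ (1 / (k : ℝ))) atTop atTop)
    (hm : ∀ k, m k = M k / (Nat.factorial k : ℝ))
    (hn : ∀ k, n k = N k / (Nat.factorial k : ℝ))
    (hmroot : Tendsto (fun k => m k ^ (1 / (k : ℝ))) atTop atTop)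
    (hnroot : Tendsto (fun k => n k ^ (1 / (k : ℝ))) atTop atTop)
    (C : ℝ) (hC : 1 ≤ C)
    (hcomp : ∀ j k : ℕ, M (j + k) ≤ C ^ (j + k) * N j * N k)
    (hm' hn' : ℝ → ℝ)
    (hhm : ∀ t > (0 : ℝ), hm' t = ⨅ k : ℕ, m k * t ^ k)
    (hhn : ∀ t > (0 : ℝ), hn' t = ⨅ k : ℕ, n k * t ^ k) :
    ∃ D : ℝ, 1 ≤ D ∧ ∀ t > (0 : ℝ), hm' t ≤ (hn' (D * t)) ^ 2 :=
  stmt15_general M N m n hMpos hNpos hm hn C hC hcomp hm' hn' hhm hhn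
end

section
/- Let $M, N$ be weight sequences with $\mu_k \le \nu_k$ for all $k$ (where $\mu_k = M_k/M_{k-1}$, $\nu_k = N_k/N_{k-1}$), satisfying: there is $C > 0$ with $\sum_{\ell \ge k} 1/\nu_\ell \le C k/\mu_k$ for all $k \ge 1$. Then there exists $C' > 0$ such that $\int_1^\infty \frac{\omega_N(tu)}{u^2}\, du \le C' \omega_M(t) + C'$ for all $t > 0$, where $\omega_M(t) = \sup_k \log(t^k/M_k)$ and similarly for $\omega_N$. -/
/-!
For a log-convex weight sequence with quotients `μ_j → ∞`, the supremum defining `ω_M(t)` is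
attained at `k = #{j : μ_j ≤ t}`, so `ω_M(t) = ∑_j log⁺ (t / μ_j)`. Since
`∫_1^∞ log⁺ (a u) / u² du = log⁺ a + min 1 a`, integrating termwise gives
`∫_1^∞ ω_N(tu) / u² du = ∑_j (log⁺ (t / ν_j) + min 1 (t / ν_j))`. The first sum is at most
`ω_M(t)` because `μ_j ≤ ν_j`. For the second, let `m` be the first index with `t < e μ_m`: the terms
with `j < m` contribute at most `m ≤ ω_M(t)`, and the tail is at most
`t ∑_{j ≥ m} 1 / ν_j ≤ C t (m + 1) / μ_m ≤ e C (m + 1)`.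
-/

open Filter MeasureTheory Set Topology Real

/-- `succRatio M j = M (j + 1) / M j` is the paper's `μ_{j+1}`. -/
noncomputable def succRatio (M : ℕ → ℝ) (j : ℕ) : ℝ := M (j + 1) / M j

section succRatio

variable {M : ℕ → ℝ}

lemma succRatio_pos (hM : ∀ k, 0 < M k) (j : ℕ) : 0 < succRatio M j :=
  div_pos (hM _) (hM _)

lemma prod_range_succRatio (hM : ∀ k, 0 < M k) (hM0 : M 0 = 1) (k : ℕ) :
    ∏ j ∈ Finset.range k, succRatio M j = M k := by
  induction k with
  | zero => simp [hM0]
  | succ k ih => rw [Finset.prod_range_succ, ih, succRatio, mul_div_cancel₀ _ (hM k).ne']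

lemma monotone_succRatio (hlc : ∀ k : ℕ, 1 ≤ k → M k / M (k - 1) ≤ M (k + 1) / M k) :
    Monotone (succRatio M) :=
  monotone_nat_of_le_succ fun j => by simpa [succRatio] using hlc (j + 1) (Nat.le_add_left 1 j)

lemma log_pow_div_eq_sum (hM : ∀ k, 0 < M k) (hM0 : M 0 = 1) {s : ℝ} (hs : 0 < s) (k : ℕ) :
    log (s ^ k / M k) = ∑ j ∈ Finset.range k, log (s / succRatio M j) := by
  have hprod : s ^ k / M k = ∏ j ∈ Finset.range k, s / succRatio M j := by
    rw [Finset.prod_div_distrib, Finset.prod_const, Finset.card_range,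
      prod_range_succRatio hM hM0]
  rw [hprod, log_prod fun j _ => (div_pos hs (succRatio_pos hM j)).ne']

lemma tendsto_succRatio_atTop (hM : ∀ k, 0 < M k) (hM0 : M 0 = 1)
    (hlc : ∀ k : ℕ, 1 ≤ k → M k / M (k - 1) ≤ M (k + 1) / M k)
    (hroot : Tendsto (fun k => M k ^ (1 / (k : ℝ))) atTop atTop) :
    Tendsto (succRatio M) atTop atTop := by
  refine tendsto_atTop_mono (fun j => ?_) (hroot.comp (tendsto_add_atTop_nat 1))
  have hle : M (j + 1) ≤ succRatio M j ^ (j + 1) := by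
    calc M (j + 1) = ∏ i ∈ Finset.range (j + 1), succRatio M i :=
          (prod_range_succRatio hM hM0 _).symm
      _ ≤ ∏ _i ∈ Finset.range (j + 1), succRatio M j :=
          Finset.prod_le_prod (fun i _ => (succRatio_pos hM i).le)
            fun i hi => monotone_succRatio hlc (Finset.mem_range_succ_iff.1 hi)
      _ = succRatio M j ^ (j + 1) := by rw [Finset.prod_const, Finset.card_range]
  calc M (j + 1) ^ (1 / ((j + 1 : ℕ) : ℝ))
      ≤ (succRatio M j ^ (j + 1)) ^ (1 / ((j + 1 : ℕ) : ℝ)) :=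
        rpow_le_rpow (hM _).le hle (by positivity)
    _ = succRatio M j := by
        rw [← rpow_natCast, ← rpow_mul (succRatio_pos hM j).le, mul_one_div_cancel (by positivity),
          rpow_one]

end succRatio

lemma summable_posLog_div {q : ℕ → ℝ} (hq : Tendsto q atTop atTop) (s : ℝ) :
    Summable fun j => log⁺ (s / q j) := by
  refine Summable.of_norm_bounded_eventually_nat summable_zero ?_
  filter_upwards [hq.eventually_ge_atTop (max |s| 1)] with j hj
  have hq0 : 0 < q j := one_pos.trans_le ((le_max_right _ _).trans hj)
  have hle : |s / q j| ≤ 1 := by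
    rw [abs_div, abs_of_pos hq0, div_le_one hq0]
    exact (le_max_left _ _).trans hj
  rw [(posLog_eq_zero_iff _).2 hle, norm_zero]

lemma isGreatest_log_pow_div {M : ℕ → ℝ} (hM : ∀ k, 0 < M k) (hM0 : M 0 = 1)
    (hmono : Monotone (succRatio M)) (htendsto : Tendsto (succRatio M) atTop atTop)
    {s : ℝ} (hs : 0 < s) :
    IsGreatest {y | ∃ k : ℕ, y = log (s ^ k / M k)} (∑' j, log⁺ (s / succRatio M j)) := by
  have hsum := summable_posLog_div htendsto s
  have hex : ∃ k, s < succRatio M k := (htendsto.eventually_gt_atTop s).exists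
  refine ⟨⟨Nat.find hex, ?_⟩, ?_⟩
  · rw [log_pow_div_eq_sum hM hM0 hs, tsum_eq_sum (s := Finset.range (Nat.find hex))]
    · refine Finset.sum_congr rfl fun j hj => posLog_eq_log ?_
      have hj : succRatio M j ≤ s := not_lt.1 (Nat.find_min hex (Finset.mem_range.1 hj))
      rw [abs_of_pos (div_pos hs (succRatio_pos hM j))]
      exact (one_le_div (succRatio_pos hM j)).2 hj
    · intro j hj
      have hj : s < succRatio M j :=
        (Nat.find_spec hex).trans_le (hmono (not_lt.1 (Finset.mem_range.not.1 hj)))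
      rw [posLog_eq_zero_iff, abs_of_pos (div_pos hs (succRatio_pos hM j))]
      exact (div_le_one (succRatio_pos hM j)).2 hj.le
  · rintro y ⟨k, rfl⟩
    rw [log_pow_div_eq_sum hM hM0 hs]
    calc ∑ j ∈ Finset.range k, log (s / succRatio M j)
        ≤ ∑ j ∈ Finset.range k, log⁺ (s / succRatio M j) :=
          Finset.sum_le_sum fun j _ => le_max_right _ _
      _ ≤ _ := hsum.sum_le_tsum _ fun j _ => posLog_nonneg

lemma hasDerivAt_neg_log_mul_add_one_div {a u : ℝ} (ha : a ≠ 0) (hu : u ≠ 0) :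
    HasDerivAt (fun x => -(log (a * x) + 1) / x) (log (a * u) / u ^ 2) u := by
  have hlog : HasDerivAt (fun x => log (a * x)) (u⁻¹) u := by
    convert ((hasDerivAt_id' u).const_mul a).log (mul_ne_zero ha hu) using 1
    field_simp
  refine (((hlog.add_const 1).neg).div (hasDerivAt_id' u) hu).congr_deriv ?_
  simp only [Pi.neg_apply]
  field_simp
  ring

lemma integral_Ioi_log_mul_div_sq {a c : ℝ} (ha : 0 < a) (hac : 1 ≤ a * c) :
    IntegrableOn (fun u => log (a * u) / u ^ 2) (Ioi c) ∧
      ∫ u in Ioi c, log (a * u) / u ^ 2 = (log (a * c) + 1) / c := by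
  have hc : 0 < c := pos_of_mul_pos_right (one_pos.trans_le hac) ha.le
  have hderiv : ∀ u ∈ Ici c, HasDerivAt (fun x => -(log (a * x) + 1) / x)
      (log (a * u) / u ^ 2) u := fun u hu =>
    hasDerivAt_neg_log_mul_add_one_div ha.ne' (hc.trans_le hu).ne'
  have hnonneg : ∀ u ∈ Ioi c, 0 ≤ log (a * u) / u ^ 2 := fun u hu =>
    div_nonneg (log_nonneg (hac.trans (by gcongr; exact hu.out.le))) (sq_nonneg u)
  have htendsto : Tendsto (fun x => -(log (a * x) + 1) / x) atTop (𝓝 0) := by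
    have hlim : Tendsto (fun x : ℝ => -(log a * x⁻¹ + log x / x + x⁻¹)) atTop (𝓝 0) := by
      have hlog : Tendsto (fun x : ℝ => log x / x) atTop (𝓝 0) := by
        simpa using Real.tendsto_pow_log_div_mul_add_atTop 1 0 1 one_ne_zero
      simpa using ((tendsto_inv_atTop_zero.const_mul (log a)).add hlog
        |>.add tendsto_inv_atTop_zero).neg
    refine hlim.congr' ?_
    filter_upwards [eventually_gt_atTop 0] with x hx
    rw [log_mul ha.ne' hx.ne']
    field_simp
  refine ⟨integrableOn_Ioi_deriv_of_nonneg' hderiv hnonneg htendsto, ?_⟩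
  rw [integral_Ioi_of_hasDerivAt_of_nonneg' hderiv hnonneg htendsto]
  ring

lemma integral_Ioi_one_posLog_mul_div_sq {a : ℝ} (ha : 0 < a) :
    IntegrableOn (fun u => log⁺ (a * u) / u ^ 2) (Ioi 1) ∧
      ∫ u in Ioi 1, log⁺ (a * u) / u ^ 2 = log⁺ a + min 1 a := by
  set c := max 1 a⁻¹
  have hc : 1 ≤ c := le_max_left _ _
  have hac : 1 ≤ a * c := by
    calc 1 = a * a⁻¹ := (mul_inv_cancel₀ ha.ne').symm
      _ ≤ a * c := by gcongr; exact le_max_right _ _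
  have hzero : EqOn (fun u => log⁺ (a * u) / u ^ 2) 0 (Ioc 1 c) := by
    intro u ⟨hu1, huc⟩
    have hua : u ≤ a⁻¹ := (le_max_iff.1 huc).resolve_left hu1.not_ge
    have hau : a * u ≤ 1 := by rwa [← le_div_iff₀' ha, one_div]
    simp [(posLog_eq_zero_iff _).2 (abs_le.2 ⟨by nlinarith, hau⟩)]
  have hlog : EqOn (fun u => log⁺ (a * u) / u ^ 2) (fun u => log (a * u) / u ^ 2) (Ioi c) :=
    fun u hu => by
      have hau : 1 ≤ a * u := hac.trans (by gcongr; exact hu.out.le)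
      simp only [posLog_eq_log (hau.trans (le_abs_self _))]
  obtain ⟨hint, hval⟩ := integral_Ioi_log_mul_div_sq ha hac
  have hint₁ : IntegrableOn (fun u => log⁺ (a * u) / u ^ 2) (Ioc 1 c) :=
    integrableOn_zero.congr_fun hzero.symm measurableSet_Ioc
  have hint₂ : IntegrableOn (fun u => log⁺ (a * u) / u ^ 2) (Ioi c) :=
    hint.congr_fun hlog.symm measurableSet_Ioi
  rw [← Ioc_union_Ioi_eq_Ioi hc]
  refine ⟨hint₁.union hint₂, ?_⟩
  rw [setIntegral_union Ioc_disjoint_Ioi_same measurableSet_Ioi hint₁ hint₂,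
    setIntegral_congr_fun measurableSet_Ioc hzero, setIntegral_congr_fun measurableSet_Ioi hlog,
    hval]
  simp only [Pi.zero_apply, integral_zero, zero_add]
  rcases le_or_gt 1 a with h1a | ha1
  · have hc1 : c = 1 := max_eq_left (inv_le_one_of_one_le₀ h1a)
    rw [hc1, mul_one, div_one, posLog_eq_log (h1a.trans (le_abs_self a)), min_eq_left h1a]
  · have hc1 : c = a⁻¹ := max_eq_right (one_le_inv₀ ha |>.2 ha1.le)
    rw [hc1, mul_inv_cancel₀ ha.ne', (posLog_eq_zero_iff a).2 (abs_le.2 ⟨by linarith, ha1.le⟩),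
      min_eq_right ha1.le]
    simp

/-- When the right-hand series diverges, the integrand is not integrable: both sides are `0`. -/
lemma integral_tsum_posLog_mul_div_sq {q : ℕ → ℝ} (hq0 : ∀ j, 0 < q j)
    (hq : Tendsto q atTop atTop) {t : ℝ} (ht : 0 < t) :
    ∫ u in Ioi 1, (∑' j, log⁺ (t * u / q j)) / u ^ 2 =
      ∑' j, (log⁺ (t / q j) + min 1 (t / q j)) := by
  set f : ℕ → ℝ → ℝ := fun j u => log⁺ (t / q j * u) / u ^ 2
  have hf j := integral_Ioi_one_posLog_mul_div_sq (div_pos ht (hq0 j))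
  have hf0 j u : 0 ≤ f j u := div_nonneg posLog_nonneg (sq_nonneg u)
  have hmeas j : Measurable (f j) := by fun_prop
  have hpointwise u : (∑' j, log⁺ (t * u / q j)) / u ^ 2 = ∑' j, f j u := by
    simp only [f, ← tsum_div_const, div_mul_eq_mul_div]
  have hsum u : Summable fun j => f j u := by
    simpa only [f, div_mul_eq_mul_div] using (summable_posLog_div hq (t * u)).div_const (u ^ 2)
  have hlintegral : ∫⁻ u in Ioi 1, ENNReal.ofReal (∑' j, f j u) =
      ∑' j, ENNReal.ofReal (log⁺ (t / q j) + min 1 (t / q j)) := by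
    calc ∫⁻ u in Ioi 1, ENNReal.ofReal (∑' j, f j u)
        = ∫⁻ u in Ioi 1, ∑' j, ENNReal.ofReal (f j u) :=
          lintegral_congr fun u => ENNReal.ofReal_tsum_of_nonneg (hf0 · u) (hsum u)
      _ = ∑' j, ∫⁻ u in Ioi 1, ENNReal.ofReal (f j u) :=
          lintegral_tsum fun j => (hmeas j).ennreal_ofReal.aemeasurable
      _ = _ := tsum_congr fun j => by
          rw [← (hf j).2, ofReal_integral_eq_lintegral_ofReal (hf j).1
            (Eventually.of_forall (hf0 j))]
  simp_rw [hpointwise]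
  rw [integral_eq_lintegral_of_nonneg_ae (Eventually.of_forall fun u => tsum_nonneg (hf0 · u))
    (Measurable.tsum hmeas).aestronglyMeasurable, hlintegral,
    ENNReal.tsum_toReal_eq fun _ => ENNReal.ofReal_ne_top]
  exact tsum_congr fun j => ENNReal.toReal_ofReal
    (add_nonneg posLog_nonneg (le_min zero_le_one (div_pos ht (hq0 j)).le))

section estimates

variable {p q : ℕ → ℝ}

lemma natCast_le_tsum_posLog_div (hp0 : ∀ j, 0 < p j) {t : ℝ}
    (hsum : Summable fun j => log⁺ (t / p j)) {m : ℕ} (hm : ∀ j < m, exp 1 * p j ≤ t) :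
    (m : ℝ) ≤ ∑' j, log⁺ (t / p j) :=
  calc (m : ℝ) = ∑ _j ∈ Finset.range m, (1 : ℝ) := by simp
    _ ≤ ∑ j ∈ Finset.range m, log⁺ (t / p j) := Finset.sum_le_sum fun j hj => by
        have hj := hm j (Finset.mem_range.1 hj)
        have ht : 0 < t := (mul_pos (exp_pos 1) (hp0 j)).trans_le hj
        refine le_max_of_le_right ((le_log_iff_exp_le (div_pos ht (hp0 j))).2 ?_)
        rwa [le_div_iff₀ (hp0 j)]
    _ ≤ _ := hsum.sum_le_tsum _ fun _ _ => posLog_nonneg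

lemma tsum_min_one_div_le_add_tsum (hq0 : ∀ j, 0 < q j) (hsum : Summable fun j => (q j)⁻¹)
    {t : ℝ} (ht : 0 ≤ t) (m : ℕ) :
    ∑' j, min 1 (t / q j) ≤ m + t * ∑' j, (q (j + m))⁻¹ := by
  have hle j : min 1 (t / q j) ≤ t * (q j)⁻¹ := min_le_right _ _
  have hmin : Summable fun j => min 1 (t / q j) :=
    (hsum.mul_left t).of_nonneg_of_le
      (fun j => le_min zero_le_one (div_nonneg ht (hq0 j).le)) hle
  rw [← hmin.sum_add_tsum_nat_add m, ← tsum_mul_left]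
  gcongr
  · exact (Finset.sum_le_sum fun j _ => min_le_left _ _).trans (by simp)
  · exact (summable_nat_add_iff m).2 hmin
  · exact ((summable_nat_add_iff m).2 hsum).mul_left t
  · exact hle _

lemma summable_inv_of_summable_min_one_div (hq : Tendsto q atTop atTop) {t : ℝ} (ht : 0 < t)
    (hmin : Summable fun j => min 1 (t / q j)) : Summable fun j => (q j)⁻¹ := by
  refine (hmin.mul_left t⁻¹).of_norm_bounded_eventually_nat ?_
  filter_upwards [hq.eventually_ge_atTop t] with j hj
  have hq0 : 0 < q j := ht.trans_le hj
  rw [min_eq_right ((div_le_one hq0).2 hj), norm_inv, norm_of_nonneg hq0.le,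
    inv_mul_eq_div, div_div_cancel_left' ht.ne']

lemma tsum_posLog_div_le_of_le (hp0 : ∀ j, 0 < p j) (hpq : ∀ j, p j ≤ q j)
    (hp : Tendsto p atTop atTop) {t : ℝ} (ht : 0 ≤ t) :
    ∑' j, log⁺ (t / q j) ≤ ∑' j, log⁺ (t / p j) :=
  (summable_posLog_div (tendsto_atTop_mono hpq hp) t).tsum_le_tsum
    (fun j => posLog_le_posLog (div_nonneg ht ((hp0 j).trans_le (hpq j)).le)
      (div_le_div_of_nonneg_left ht (hp0 j) (hpq j)))
    (summable_posLog_div hp t)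

lemma tsum_min_one_div_le (hp0 : ∀ j, 0 < p j) (hq0 : ∀ j, 0 < q j)
    (hp : Tendsto p atTop atTop) {C : ℝ} (hC : 0 ≤ C) (hsum : Summable fun j => (q j)⁻¹)
    (htail : ∀ m : ℕ, ∑' j, (q (j + m))⁻¹ ≤ C * (m + 1) / p m) {t : ℝ} (ht : 0 < t) :
    ∑' j, min 1 (t / q j) ≤ (1 + exp 1 * C) * ∑' j, log⁺ (t / p j) + exp 1 * C := by
  have hex : ∃ m, t < exp 1 * p m :=
    (hp.eventually_gt_atTop (t / exp 1)).exists.imp fun m hm => by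
      rwa [div_lt_iff₀' (exp_pos 1)] at hm
  set m := Nat.find hex
  have hm : (m : ℝ) ≤ ∑' j, log⁺ (t / p j) :=
    natCast_le_tsum_posLog_div hp0 (summable_posLog_div hp t)
      fun j hj => not_lt.1 (Nat.find_min hex hj)
  have htail_le : t * ∑' j, (q (j + m))⁻¹ ≤ exp 1 * C * (m + 1) :=
    calc t * ∑' j, (q (j + m))⁻¹ ≤ t * (C * (m + 1) / p m) := by gcongr; exact htail m
      _ = C * (m + 1) * (t / p m) := by ring
      _ ≤ C * (m + 1) * exp 1 := by
          gcongr
          rw [div_le_iff₀ (hp0 m)]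
          exact (Nat.find_spec hex).le
      _ = exp 1 * C * (m + 1) := by ring
  calc ∑' j, min 1 (t / q j) ≤ m + t * ∑' j, (q (j + m))⁻¹ :=
        tsum_min_one_div_le_add_tsum hq0 hsum ht.le m
    _ ≤ (1 + exp 1 * C) * m + exp 1 * C := by linarith
    _ ≤ _ := by gcongr

lemma tsum_posLog_add_min_le (hp0 : ∀ j, 0 < p j) (hq0 : ∀ j, 0 < q j)
    (hpq : ∀ j, p j ≤ q j) (hp : Tendsto p atTop atTop) {C : ℝ} (hC : 0 ≤ C)
    (htail : ∀ m : ℕ, ∑' j, (q (j + m))⁻¹ ≤ C * (m + 1) / p m) {t : ℝ} (ht : 0 < t) :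
    ∑' j, (log⁺ (t / q j) + min 1 (t / q j)) ≤
      (2 + exp 1 * C) * ∑' j, log⁺ (t / p j) + (2 + exp 1 * C) := by
  have hω : 0 ≤ ∑' j, log⁺ (t / p j) := tsum_nonneg fun _ => posLog_nonneg
  by_cases hsum : Summable fun j => log⁺ (t / q j) + min 1 (t / q j)
  · have hq := tendsto_atTop_mono hpq hp
    have hmin : Summable fun j => min 1 (t / q j) :=
      hsum.of_nonneg_of_le (fun j => le_min zero_le_one (div_pos ht (hq0 j)).le)
        fun j => le_add_of_nonneg_left posLog_nonneg
    rw [(summable_posLog_div hq t).tsum_add hmin]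
    have hlog := tsum_posLog_div_le_of_le hp0 hpq hp ht.le
    have hmin_le := tsum_min_one_div_le hp0 hq0 hp hC
      (summable_inv_of_summable_min_one_div hq ht hmin) htail ht
    nlinarith
  · rw [tsum_eq_zero_of_not_summable hsum]
    positivity

end estimates

theorem stmt18_general (M N : ℕ → ℝ) (hMpos : ∀ k, 0 < M k) (hNpos : ∀ k, 0 < N k)
    (hM0 : M 0 = 1) (hN0 : N 0 = 1)
    (hMlc : ∀ k : ℕ, 1 ≤ k → M k / M (k - 1) ≤ M (k + 1) / M k)
    (hNlc : ∀ k : ℕ, 1 ≤ k → N k / N (k - 1) ≤ N (k + 1) / N k)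
    (hMroot : Tendsto (fun k => M k ^ (1 / (k : ℝ))) atTop atTop)
    (hμν : ∀ k : ℕ, 1 ≤ k → M k / M (k - 1) ≤ N k / N (k - 1))
    (C : ℝ) (hC : 0 < C)
    (htail : ∀ k : ℕ, 1 ≤ k → (∑' j : ℕ, 1 / (N (k + j) / N (k + j - 1))) ≤ C * k / (M k / M (k - 1)))
    (ωM ωN : ℝ → ℝ)
    (hωM : ∀ t > (0 : ℝ), ωM t = sSup {y | ∃ k : ℕ, y = Real.log (t ^ k / M k)})
    (hωN : ∀ t > (0 : ℝ), ωN t = sSup {y | ∃ k : ℕ, y = Real.log (t ^ k / N k)}) :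
    ∃ C' > (0 : ℝ), ∀ t > (0 : ℝ),
      (∫ u in Set.Ioi (1 : ℝ), ωN (t * u) / u ^ 2) ≤ C' * ωM t + C' := by
  have hpq j : succRatio M j ≤ succRatio N j := by
    simpa [succRatio] using hμν (j + 1) (Nat.le_add_left 1 j)
  have hp := tendsto_succRatio_atTop hMpos hM0 hMlc hMroot
  have hq := tendsto_atTop_mono hpq hp
  have hωM' t (ht : 0 < t) : ωM t = ∑' j, log⁺ (t / succRatio M j) := by
    rw [hωM t ht, (isGreatest_log_pow_div hMpos hM0 (monotone_succRatio hMlc) hp ht).csSup_eq]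
  have hωN' t (ht : 0 < t) : ωN t = ∑' j, log⁺ (t / succRatio N j) := by
    rw [hωN t ht, (isGreatest_log_pow_div hNpos hN0 (monotone_succRatio hNlc) hq ht).csSup_eq]
  have htail' (m : ℕ) : ∑' j, (succRatio N (j + m))⁻¹ ≤ C * (m + 1) / succRatio M m := by
    have hterm j : 1 / (N (m + 1 + j) / N (m + 1 + j - 1)) = (succRatio N (j + m))⁻¹ := by
      rw [one_div, succRatio, show m + 1 + j - 1 = j + m by omega, Nat.add_right_comm, add_comm m j]
    have h := htail (m + 1) (Nat.le_add_left 1 m)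
    rwa [tsum_congr hterm, Nat.add_sub_cancel, Nat.cast_succ] at h
  refine ⟨2 + exp 1 * C, by positivity, fun t ht => ?_⟩
  calc ∫ u in Ioi 1, ωN (t * u) / u ^ 2
      = ∫ u in Ioi 1, (∑' j, log⁺ (t * u / succRatio N j)) / u ^ 2 :=
        setIntegral_congr_fun measurableSet_Ioi fun u hu => by
          rw [hωN' _ (mul_pos ht (one_pos.trans hu))]
    _ = ∑' j, (log⁺ (t / succRatio N j) + min 1 (t / succRatio N j)) :=
        integral_tsum_posLog_mul_div_sq (succRatio_pos hNpos) hq ht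
    _ ≤ (2 + exp 1 * C) * ωM t + (2 + exp 1 * C) := by
        rw [hωM' t ht]
        exact tsum_posLog_add_min_le (succRatio_pos hMpos) (succRatio_pos hNpos) hpq hp hC.le
          htail' ht

theorem stmt18 (M N : ℕ → ℝ) (hMpos : ∀ k, 0 < M k) (hNpos : ∀ k, 0 < N k)
    (hM0 : M 0 = 1) (hN0 : N 0 = 1)
    (hMlc : ∀ k : ℕ, 1 ≤ k → M k / M (k - 1) ≤ M (k + 1) / M k)
    (hNlc : ∀ k : ℕ, 1 ≤ k → N k / N (k - 1) ≤ N (k + 1) / N k)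
    (hMroot : Tendsto (fun k => M k ^ (1 / (k : ℝ))) atTop atTop)
    (hNroot : Tendsto (fun k => N k ^ (1 / (k : ℝ))) atTop atTop)
    (hμν : ∀ k : ℕ, 1 ≤ k → M k / M (k - 1) ≤ N k / N (k - 1))
    (C : ℝ) (hC : 0 < C)
    (htail : ∀ k : ℕ, 1 ≤ k → (∑' j : ℕ, 1 / (N (k + j) / N (k + j - 1))) ≤ C * k / (M k / M (k - 1)))
    (ωM ωN : ℝ → ℝ)
    (hωM : ∀ t > (0 : ℝ), ωM t = sSup {y | ∃ k : ℕ, y = Real.log (t ^ k / M k)})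
    (hωN : ∀ t > (0 : ℝ), ωN t = sSup {y | ∃ k : ℕ, y = Real.log (t ^ k / N k)}) :
    ∃ C' > (0 : ℝ), ∀ t > (0 : ℝ),
      (∫ u in Set.Ioi (1 : ℝ), ωN (t * u) / u ^ 2) ≤ C' * ωM t + C' :=
  stmt18_general M N hMpos hNpos hM0 hN0 hMlc hNlc hMroot hμν C hC htail ωM ωN hωM hωN
end

section
/- Let $\mu = (\mu_k)_{k \ge 1}$ be a positive increasing sequence with $\sum_k 1/\mu_k < \infty$. Define $\tau_k := k/\mu_k + \sum_{j \ge k} 1/\mu_j$ and $\sigma_k := \tau_1 k/\tau_k$ for $k \ge 1$, $\sigma_0 := 1$. Then: (a) $\sigma_k \le \tau_1 \mu_k$ for all $k \ge 1$; (b) $\sum_{j \ge k} 1/\mu_j \le \tau_1 \, k/\sigma_k$ for all $k \ge 1$; (c) the sequence $\sigma_k/k$ is increasing and tends to infinity, with $\sigma_k/k \ge 1$. -/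
open Filter

theorem stmt19 (μ : ℕ → ℝ) (hpos : ∀ k : ℕ, 1 ≤ k → 0 < μ k)
    (hmono : ∀ j k : ℕ, 1 ≤ j → j ≤ k → μ j ≤ μ k)
    (hsum : Summable (fun k => 1 / μ (k + 1)))
    (τ σ : ℕ → ℝ)
    (hτ : ∀ k : ℕ, 1 ≤ k → τ k = k / μ k + ∑' j : ℕ, 1 / μ (k + j))
    (hσ : ∀ k : ℕ, 1 ≤ k → σ k = τ 1 * k / τ k) (hσ0 : σ 0 = 1) :
    (∀ k : ℕ, 1 ≤ k → σ k ≤ τ 1 * μ k) ∧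
    (∀ k : ℕ, 1 ≤ k → (∑' j : ℕ, 1 / μ (k + j)) ≤ τ 1 * k / σ k) ∧
    ((∀ j k : ℕ, 1 ≤ j → j ≤ k → σ j / j ≤ σ k / k) ∧
      Tendsto (fun k => σ k / k) atTop atTop ∧ ∀ k : ℕ, 1 ≤ k → 1 ≤ σ k / k) := by
  set R : ℕ → ℝ := fun k => ∑' j : ℕ, 1 / μ (k + j) with hRdef
  have hτ' : ∀ k : ℕ, 1 ≤ k → τ k = k / μ k + R k := hτ
  have hgsum : Summable (fun n => 1 / μ n) := (summable_nat_add_iff 1).mp hsum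
  have hRsum : ∀ k : ℕ, Summable (fun j => 1 / μ (k + j)) := by
    intro k
    have := (summable_nat_add_iff (f := fun n => 1 / μ n) k).mpr hgsum
    simpa [add_comm] using this
  have hRnonneg : ∀ k : ℕ, 1 ≤ k → 0 ≤ R k := by
    intro k hk
    refine tsum_nonneg fun j => ?_
    have := hpos (k + j) (by omega)
    positivity
  have hRstep : ∀ k : ℕ, R k = 1 / μ k + R (k + 1) := by
    intro k
    have h0 := Summable.tsum_eq_zero_add (hRsum k)
    show (∑' j : ℕ, 1 / μ (k + j)) = 1 / μ k + ∑' j : ℕ, 1 / μ ((k+1) + j)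
    rw [h0]
    simp only [add_zero]
    congr 1
    exact tsum_congr fun j => by rw [show k + (j+1) = (k+1)+j from by omega]
  have hRanti : ∀ j k : ℕ, 1 ≤ j → j ≤ k → R k ≤ R j := by
    intro j k hj hjk
    induction k with
    | zero => omega
    | succ n ih =>
      rcases Nat.eq_or_lt_of_le hjk with h | h
      · simp [h]
      · have hn : j ≤ n := by omega
        have h1 : R (n + 1) ≤ R n := by
          have hμ := hpos n (by omega)
          have : (0:ℝ) ≤ 1 / μ n := by positivity
          linarith [hRstep n]
        exact le_trans h1 (ih hn)
  have hτpos : ∀ k : ℕ, 1 ≤ k → 0 < τ k := by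
    intro k hk
    rw [hτ' k hk]
    have hμ := hpos k hk
    have h1 : (0:ℝ) < (k:ℝ) / μ k := by
      have : (0:ℝ) < (k:ℝ) := by exact_mod_cast hk
      positivity
    linarith [hRnonneg k hk]
  have hτstep : ∀ k : ℕ, 1 ≤ k → τ (k + 1) ≤ τ k := by
    intro k hk
    rw [hτ' k hk, hτ' (k+1) (by omega), hRstep k]
    have hμk := hpos k hk
    have hμk1 := hpos (k+1) (by omega)
    have hle := hmono k (k+1) hk (by omega)
    have h1 : ((k:ℝ)+1) / μ (k+1) ≤ ((k:ℝ)+1) / μ k := by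
      apply div_le_div_of_nonneg_left _ hμk hle
      positivity
    have h2 : ((k:ℝ)+1) / μ k = (k:ℝ) / μ k + 1 / μ k := by ring
    push_cast
    linarith
  have hτanti : ∀ j k : ℕ, 1 ≤ j → j ≤ k → τ k ≤ τ j := by
    intro j k hj hjk
    induction k with
    | zero => omega
    | succ n ih =>
      rcases Nat.eq_or_lt_of_le hjk with h | h
      · simp [h]
      · have hn : j ≤ n := by omega
        exact le_trans (hτstep n (by omega)) (ih hn)
  -- k / μ (2k) ≤ R k
  have hhalf : ∀ k : ℕ, 1 ≤ k → (k:ℝ) / μ (2*k) ≤ R k := by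
    intro k hk
    have hμ2k := hpos (2*k) (by omega)
    have h1 : ∑ j ∈ Finset.range k, 1 / μ (k + j) ≤ R k := by
      refine Summable.sum_le_tsum _ (fun j _ => ?_) (hRsum k)
      have := hpos (k + j) (by omega)
      positivity
    have h2 : (k:ℝ) / μ (2*k) ≤ ∑ j ∈ Finset.range k, 1 / μ (k + j) := by
      have h3 : ∀ j ∈ Finset.range k, 1 / μ (2*k) ≤ 1 / μ (k + j) := by
        intro j hj
        have hj' : j < k := Finset.mem_range.mp hj
        have hle : μ (k + j) ≤ μ (2*k) := hmono (k+j) (2*k) (by omega) (by omega)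
        have hμkj := hpos (k+j) (by omega)
        exact one_div_le_one_div_of_le hμkj hle
      calc (k:ℝ) / μ (2*k) = ∑ j ∈ Finset.range k, 1 / μ (2*k) := by
            rw [Finset.sum_const, Finset.card_range]; ring
        _ ≤ _ := Finset.sum_le_sum h3
    linarith
  have hτ2k : ∀ k : ℕ, 1 ≤ k → τ (2*k) ≤ 3 * R k := by
    intro k hk
    rw [hτ' (2*k) (by omega)]
    have h1 := hhalf k hk
    have h2 := hRanti k (2*k) hk (by omega)
    have hμ2k := hpos (2*k) (by omega)
    have h3 : ((2*k : ℕ):ℝ) / μ (2*k) = 2 * ((k:ℝ) / μ (2*k)) := by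
      push_cast; ring
    linarith
  -- R tends to 0
  have hRtendsto : Tendsto R atTop (nhds 0) := by
    have := tendsto_sum_nat_add (f := fun n => 1 / μ n)
    refine this.congr fun k => ?_
    exact tsum_congr fun j => by rw [add_comm]
  -- τ tends to 0
  have hτtendsto : Tendsto τ atTop (nhds 0) := by
    have hdiv : Tendsto (fun n : ℕ => n / 2) atTop atTop :=
      tendsto_atTop_atTop.mpr fun b => ⟨2*b, fun n hn => by omega⟩
    have hup : Tendsto (fun n : ℕ => 3 * R (n / 2)) atTop (nhds 0) := by
      have := (hRtendsto.comp hdiv).const_mul (3:ℝ)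
      simpa using this
    refine tendsto_of_tendsto_of_tendsto_of_le_of_le' tendsto_const_nhds hup ?_ ?_
    · filter_upwards [eventually_ge_atTop 2] with n hn
      exact le_of_lt (hτpos n (by omega))
    · filter_upwards [eventually_ge_atTop 2] with n hn
      have h1 : 1 ≤ n / 2 := by omega
      have h2 : 2 * (n / 2) ≤ n := by omega
      calc τ n ≤ τ (2 * (n / 2)) := hτanti (2 * (n/2)) n (by omega) h2
        _ ≤ 3 * R (n / 2) := hτ2k (n/2) h1
  have hτ1pos : 0 < τ 1 := hτpos 1 le_rfl
  -- key: σ k / k = τ 1 / τ k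
  have hσk : ∀ k : ℕ, 1 ≤ k → σ k / k = τ 1 / τ k := by
    intro k hk
    have hk0 : (k:ℝ) ≠ 0 := by positivity
    have hτk := (hτpos k hk).ne'
    rw [hσ k hk]
    field_simp
  refine ⟨?_, ?_, ?_, ?_, ?_⟩
  · -- (a)
    intro k hk
    rw [hσ k hk]
    have hμ := hpos k hk
    have hτk := hτpos k hk
    have hkey : (k:ℝ) ≤ μ k * τ k := by
      rw [hτ' k hk]
      have h1 : μ k * ((k:ℝ) / μ k) = k := by field_simp
      have h2 := hRnonneg k hk
      nlinarith
    rw [div_le_iff₀ hτk]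
    nlinarith
  · -- (b)
    intro k hk
    have hτk := hτpos k hk
    have hk0 : (0:ℝ) < (k:ℝ) := by exact_mod_cast hk
    have heq : τ 1 * k / σ k = τ k := by
      rw [hσ k hk]
      field_simp
    rw [heq]
    have hμ := hpos k hk
    have h1 : (0:ℝ) ≤ (k:ℝ) / μ k := by positivity
    have := hτ' k hk
    linarith
  · -- (c) monotone
    intro j k hj hjk
    rw [hσk j hj, hσk k (by omega)]
    exact div_le_div_of_nonneg_left hτ1pos.le (hτpos k (by omega)) (hτanti j k hj hjk)
  · -- (c) tendsto
    have hinv : Tendsto (fun k => (τ k)⁻¹) atTop atTop := by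
      refine Tendsto.inv_tendsto_nhdsGT_zero ?_
      refine tendsto_nhdsWithin_of_tendsto_nhds_of_eventually_within _ hτtendsto ?_
      filter_upwards [eventually_ge_atTop 1] with n hn
      exact hτpos n hn
    have := hinv.const_mul_atTop hτ1pos
    refine this.congr' ?_
    filter_upwards [eventually_ge_atTop 1] with n hn
    rw [hσk n hn, div_eq_mul_inv]
  · -- (c) ≥ 1
    intro k hk
    rw [hσk k hk]
    rw [le_div_iff₀ (hτpos k hk)]
    simpa using hτanti 1 k le_rfl hk
end
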